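/- arXiv:1112.2480 — 3 statements merged into one kernel-verified Lean document; each statement's English description precedes it below -/
import Mathlib

section
/- If x, y, θ : ℝ → ℝ satisfy x' = cos θ, y' = sin θ, θ' = sin(2θ)(−x cos θ + y sin θ)/(1 + x² + y²) with x(0) = y(0) = 0 and θ(0) = θ₀, then the functions x̄(s) = −x(−s), ȳ(s) = −y(−s), θ̄(s) = θ(−s) satisfy the same system with the same initial conditions; consequently x(−s) = −x(s) and y(−s) = −y(s) for all s, i.e., the generating curve is symmetric with respect to the origin. -/
/-- The ODE system for generating curves of 3-invariant minimal surfaces in Sol₃. -/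
def MinimalSys (x y θ : ℝ → ℝ) : Prop :=
  (∀ s, HasDerivAt x (Real.cos (θ s)) s) ∧
  (∀ s, HasDerivAt y (Real.sin (θ s)) s) ∧
  (∀ s, HasDerivAt θ
    (Real.sin (2 * θ s) * (-(x s) * Real.cos (θ s) + y s * Real.sin (θ s)) /
      (1 + (x s) ^ 2 + (y s) ^ 2)) s)

/-! The system is invariant under the point reflection `(s, x, y, θ) ↦ (-s, -x, -y, θ)`:
reversing time flips the signs of all three derivatives, which is compensated in `x'`, `y'`
by negating `x`, `y`, and in `θ'` because its right-hand side is odd in `(x, y)`. Uniqueness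
for the initial value problem then forces the solution through the origin to be odd. -/

theorem MinimalSys.pointReflection {x y θ : ℝ → ℝ} (h : MinimalSys x y θ) :
    MinimalSys (fun s => -x (-s)) (fun s => -y (-s)) (fun s => θ (-s)) := by
  obtain ⟨hx, hy, hθ⟩ := h
  refine ⟨fun s => ?_, fun s => ?_, fun s => ?_⟩
  · exact ((hx (-s)).comp s (hasDerivAt_neg s)).neg.congr_deriv (by ring)
  · exact ((hy (-s)).comp s (hasDerivAt_neg s)).neg.congr_deriv (by ring)
  · exact ((hθ (-s)).comp s (hasDerivAt_neg s)).congr_deriv (by ring)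

/-- If (x, y, θ) solves the system with x(0) = y(0) = 0, θ(0) = θ₀, and is the unique
such solution, then (s ↦ −x(−s), s ↦ −y(−s), s ↦ θ(−s)) solves the same system with
the same initial conditions; consequently x(−s) = −x(s) and y(−s) = −y(s) for all s:
the generating curve is symmetric with respect to the origin. -/
theorem minimalSys_origin_symmetry (x y θ : ℝ → ℝ) (θ₀ : ℝ)
    (hsys : MinimalSys x y θ) (hx0 : x 0 = 0) (hy0 : y 0 = 0) (hθ0 : θ 0 = θ₀)
    (huniq : ∀ x' y' θ' : ℝ → ℝ, MinimalSys x' y' θ' →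
      x' 0 = 0 → y' 0 = 0 → θ' 0 = θ₀ → x' = x ∧ y' = y ∧ θ' = θ) :
    MinimalSys (fun s => -x (-s)) (fun s => -y (-s)) (fun s => θ (-s)) ∧
    ((fun s => -x (-s)) 0 = 0 ∧ (fun s => -y (-s)) 0 = 0 ∧ (fun s => θ (-s)) 0 = θ₀) ∧
    (∀ s : ℝ, x (-s) = -x s ∧ y (-s) = -y s) := by
  have hinit : (fun s => -x (-s)) 0 = 0 ∧ (fun s => -y (-s)) 0 = 0 ∧ (fun s => θ (-s)) 0 = θ₀ :=
    ⟨by simp [hx0], by simp [hy0], by simpa using hθ0⟩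
  obtain ⟨hx, hy, -⟩ :=
    huniq _ _ _ hsys.pointReflection hinit.1 hinit.2.1 hinit.2.2
  refine ⟨hsys.pointReflection, hinit, fun s => ⟨?_, ?_⟩⟩
  · linarith [congrFun hx s]
  · linarith [congrFun hy s]
end

section
/- Let (x, y, θ) be a solution on ℝ of x' = cos θ, y' = sin θ, θ' = sin(2θ)(−x cos θ + y sin θ)/(1 + x² + y²). If θ(s₀) ≡ 0 (mod π) for some s₀, then θ is constant (equal to that value mod π) on all of ℝ, and the curve s ↦ (x(s), y(s)) is a horizontal straight line. -/
/-!
On a solution, `f = sin ∘ θ` satisfies `f' = cos θ · θ'`, and since `sin 2θ = 2 sin θ cos θ` and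
`|-x cos θ + y sin θ| ≤ |x| + |y| ≤ 1 + x² + y²`, we get `|f'| ≤ 2 |f|`. By Grönwall's inequality
(run forwards and backwards in time) `f` vanishes identically once it vanishes at `s₀`. Then
`θ' = 0` and `y' = 0`, while `x' = cos θ(s₀)` is constant.
-/

open Real

section Gronwall

variable {E : Type*} [NormedAddCommGroup E] [NormedSpace ℝ E] {K : ℝ}

theorem eq_zero_of_norm_deriv_le_mul_norm_of_le {f f' : ℝ → E}
    (hf : ∀ t, HasDerivAt f (f' t) t) (bound : ∀ t, ‖f' t‖ ≤ K * ‖f t‖)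
    {a t : ℝ} (ha : f a = 0) (hat : a ≤ t) : f t = 0 :=
  eq_zero_of_abs_deriv_le_mul_abs_self_of_eq_zero_right
    (fun s _ => (hf s).continuousAt.continuousWithinAt) (fun s _ => (hf s).hasDerivWithinAt)
    ha (fun s _ => bound s) t ⟨hat, le_rfl⟩

theorem eq_zero_of_norm_deriv_le_mul_norm {f f' : ℝ → E}
    (hf : ∀ t, HasDerivAt f (f' t) t) (bound : ∀ t, ‖f' t‖ ≤ K * ‖f t‖)
    {a : ℝ} (ha : f a = 0) (t : ℝ) : f t = 0 := by
  rcases le_total a t with hat | hta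
  · exact eq_zero_of_norm_deriv_le_mul_norm_of_le hf bound ha hat
  · have hrev : ∀ s, HasDerivAt (fun s => f (-s)) (-f' (-s)) s := fun s => by
      simpa [Function.comp_def] using (hf (-s)).scomp s (hasDerivAt_neg s)
    simpa using eq_zero_of_norm_deriv_le_mul_norm_of_le (f := fun s => f (-s)) hrev
      (fun s => by simpa using bound (-s)) (a := -a) (by simpa using ha) (neg_le_neg hta)

end Gronwall

theorem eq_add_mul_sub_of_hasDerivAt_const {f : ℝ → ℝ} {c : ℝ}
    (hf : ∀ t, HasDerivAt f c t) (a t : ℝ) : f t = f a + c * (t - a) := by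
  have hg : ∀ t, HasDerivAt (fun t => f t - c * t) 0 t := fun t => by
    simpa using (hf t).fun_sub ((hasDerivAt_id' t).const_mul c)
  have := is_const_of_deriv_eq_zero (fun t => (hg t).differentiableAt) (fun t => (hg t).deriv) t a
  linarith

theorem abs_neg_mul_cos_add_mul_sin_le (a b t : ℝ) :
    |-a * cos t + b * sin t| ≤ 1 + a ^ 2 + b ^ 2 := by
  have hab : |-a * cos t + b * sin t| ≤ |a| + |b| :=
    calc |-a * cos t + b * sin t| ≤ |a| * |cos t| + |b| * |sin t| := by
          simpa [abs_mul] using abs_add_le (-a * cos t) (b * sin t)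
      _ ≤ |a| * 1 + |b| * 1 := by gcongr <;> simp [abs_cos_le_one, abs_sin_le_one]
      _ = |a| + |b| := by ring
  nlinarith [sq_abs a, sq_abs b, sq_nonneg (|a| - 1), sq_nonneg (|b| - 1)]

theorem abs_minimalSys_rhs_le (a b t : ℝ) :
    |sin (2 * t) * (-a * cos t + b * sin t) / (1 + a ^ 2 + b ^ 2)| ≤ 2 * |sin t| := by
  have hD : 0 < 1 + a ^ 2 + b ^ 2 := by positivity
  have hsin2 : |sin (2 * t)| ≤ 2 * |sin t| := by
    rw [sin_two_mul, abs_mul, abs_mul, abs_two]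
    exact mul_le_of_le_one_right (by positivity) (abs_cos_le_one t)
  rw [abs_div, abs_of_pos hD, div_le_iff₀ hD, abs_mul]
  exact mul_le_mul hsin2 (abs_neg_mul_cos_add_mul_sin_le a b t) (abs_nonneg _) (by positivity)

namespace MinimalSys

variable {x y θ : ℝ → ℝ}

theorem sin_theta_eq_zero (hsys : MinimalSys x y θ) {s₀ : ℝ} (h₀ : sin (θ s₀) = 0) (s : ℝ) :
    sin (θ s) = 0 := by
  refine eq_zero_of_norm_deriv_le_mul_norm (K := 2)
    (fun s => (hasDerivAt_sin (θ s)).comp s (hsys.2.2 s)) (fun s => ?_) h₀ s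
  rw [Real.norm_eq_abs, Real.norm_eq_abs, abs_mul]
  exact mul_le_of_le_one_left (abs_nonneg _) (abs_cos_le_one _) |>.trans
    (abs_minimalSys_rhs_le (x s) (y s) (θ s))

end MinimalSys

/-- If a solution of the minimal-surface ODE system satisfies θ(s₀) ≡ 0 (mod π) at some
point s₀, then θ is constant on ℝ and the curve s ↦ (x(s), y(s)) is a horizontal
straight line (y is constant and x moves at unit speed). -/
theorem minimalSys_theta_multiple_pi (x y θ : ℝ → ℝ) (s₀ : ℝ)
    (hsys : MinimalSys x y θ) (h : ∃ k : ℤ, θ s₀ = k * Real.pi) :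
    (∀ s, θ s = θ s₀) ∧ (∀ s, y s = y s₀) ∧
    (∀ s, x s = x s₀ + Real.cos (θ s₀) * (s - s₀)) := by
  obtain ⟨k, hk⟩ := h
  have hsin : ∀ s, sin (θ s) = 0 := hsys.sin_theta_eq_zero (by rw [hk]; exact sin_int_mul_pi k)
  obtain ⟨hx, hy, hθ⟩ := hsys
  have hθ_const : ∀ s, θ s = θ s₀ := fun s => by
    simpa using eq_add_mul_sub_of_hasDerivAt_const (c := 0) (fun s => by
      simpa [sin_two_mul, hsin s] using hθ s) s₀ s
  refine ⟨hθ_const, fun s => ?_, eq_add_mul_sub_of_hasDerivAt_const (fun s => ?_) s₀⟩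
  · simpa using eq_add_mul_sub_of_hasDerivAt_const (c := 0) (fun s => by simpa [hsin s] using hy s) s₀ s
  · simpa [hθ_const s] using hx s
end

section
/- Let y : I → ℝ be a twice differentiable function on an open interval I containing 0, satisfying y'' = 2y'(yy' − x)/(1 + x² + y²), with y(0) = 0 and 0 < y'(0) < 1. Then on I ∩ [0,∞): (a) y'(x) > 0 for all x; (b) y(x)y'(x) − x < 0 for all x > 0, hence y''(x) < 0 for x > 0; (c) y'(x) < y'(0) < 1 for x > 0; (d) y(x) < x for all x > 0. -/
open Set Filter Topology Real

/-! Along the solution, `y'' = p y'` with `p = 2(yy' − x)/(1 + x² + y²)`, so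
`y' = y'(0) exp ∫ p` stays positive. The function `h = yy' − x` vanishes at `0` with
`h'(0) = y'(0)² − 1 < 0`. If `h` had a first zero `c > 0`, then `y'' < 0` on `(0, c)` would give
`y'(c) < y'(0) < 1` and, by the mean value theorem, `y(c) < y'(0) c < c`, hence `y(c) y'(c) < c`,
i.e. `h(c) < 0`. So `h < 0` on `(0, b)`, and the same monotonicity of `y'` gives the remaining
claims. -/

theorem HasDerivAt.eventually_neg_nhdsGT {f : ℝ → ℝ} {f' x : ℝ} (hf : HasDerivAt f f' x)
    (hf' : f' < 0) (hx : f x = 0) : ∀ᶠ t in 𝓝[>] x, f t < 0 := by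
  have hsign := eventually_nhdsWithin_sign_eq_of_deriv_neg (hf.deriv ▸ hf') hx
  filter_upwards [nhdsWithin_le_nhds hsign, self_mem_nhdsWithin] with t ht hxt
  rwa [sign_neg (sub_neg.2 hxt), sign_eq_neg_one_iff] at ht

theorem exists_first_nonneg_of_eventually_neg {h : ℝ → ℝ} {x₀ x : ℝ} (hx : x₀ < x)
    (hcont : ContinuousOn h (Icc x₀ x)) (hnear : ∀ᶠ t in 𝓝[>] x₀, h t < 0) (hhx : 0 ≤ h x) :
    ∃ c ∈ Ioc x₀ x, 0 ≤ h c ∧ ∀ t ∈ Ioo x₀ c, h t < 0 := by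
  obtain ⟨u, hu, hneg⟩ := mem_nhdsGT_iff_exists_Ioo_subset.1 hnear
  have hux : u ≤ x := not_lt.1 fun hxu => (hneg ⟨hx, hxu⟩ : h x < 0).not_ge hhx
  obtain ⟨δ, hx₀δ, hδu⟩ := exists_between hu.out
  set S := Icc δ x ∩ h ⁻¹' Ici 0
  have hS : IsClosed S :=
    (hcont.mono (Icc_subset_Icc_left (by linarith))).preimage_isClosed_of_isClosed
      isClosed_Icc isClosed_Ici
  have hxS : x ∈ S := ⟨⟨by linarith, le_rfl⟩, hhx⟩
  have hcS : sInf S ∈ S := hS.csInf_mem ⟨x, hxS⟩ (bddBelow_Icc.mono inter_subset_left)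
  refine ⟨sInf S, ⟨by linarith [hcS.1.1], hcS.1.2⟩, hcS.2, fun t ht => ?_⟩
  by_cases htu : t < u
  · exact hneg ⟨ht.1, htu⟩
  · by_contra! hht
    have htS : t ∈ S := ⟨⟨by linarith, by linarith [hcS.1.2, ht.2]⟩, hht⟩
    exact (csInf_le (bddBelow_Icc.mono inter_subset_left) htS).not_gt ht.2

theorem eq_mul_exp_integral_of_hasDerivAt_eq_mul {f p : ℝ → ℝ} {s : Set ℝ} {x₀ : ℝ}
    (hs : IsOpen s) (hs' : s.OrdConnected) (hf : ∀ x ∈ s, HasDerivAt f (f x * p x) x)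
    (hp : ContinuousOn p s) (hx₀ : x₀ ∈ s) :
    ∀ x ∈ s, f x = f x₀ * exp (∫ t in x₀..x, p t) := by
  set P : ℝ → ℝ := fun x => ∫ t in x₀..x, p t
  have hP : ∀ x ∈ s, HasDerivAt P (p x) x := fun x hx =>
    intervalIntegral.integral_hasDerivAt_right
      ((hp.mono (hs'.uIcc_subset hx₀ hx)).intervalIntegrable)
      (hp.stronglyMeasurableAtFilter hs x hx) (hp.continuousAt (hs.mem_nhds hx))
  have hderiv : ∀ x ∈ s, HasDerivAt (fun x => f x * exp (-P x)) 0 x := fun x hx =>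
    ((hf x hx).mul (hP x hx).neg.exp).congr_deriv (by ring)
  intro x hx
  have hconst := hs.is_const_of_deriv_eq_zero hs'.isPreconnected
    (fun t ht => (hderiv t ht).differentiableAt.differentiableWithinAt)
    (fun t ht => (hderiv t ht).deriv) hx hx₀
  simp only [P, intervalIntegral.integral_same, neg_zero, exp_zero, mul_one] at hconst
  rw [← hconst, mul_assoc, ← exp_add, neg_add_cancel, exp_zero, mul_one]

structure MinimalGraphSolution (I : Set ℝ) (y y' y'' : ℝ → ℝ) : Prop where
  hasDerivAt : ∀ x ∈ I, HasDerivAt y (y' x) x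
  hasDerivAt_deriv : ∀ x ∈ I, HasDerivAt y' (y'' x) x
  ode : ∀ x ∈ I, y'' x = 2 * y' x * (y x * y' x - x) / (1 + x ^ 2 + y x ^ 2)

namespace MinimalGraphSolution

variable {I : Set ℝ} {y y' y'' : ℝ → ℝ}

theorem continuousOn (hsol : MinimalGraphSolution I y y' y'') : ContinuousOn y I :=
  fun x hx => (hsol.hasDerivAt x hx).continuousAt.continuousWithinAt

theorem continuousOn_deriv (hsol : MinimalGraphSolution I y y' y'') : ContinuousOn y' I :=
  fun x hx => (hsol.hasDerivAt_deriv x hx).continuousAt.continuousWithinAt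

/-- `y'` solves the linear equation `u' = p u`, so it cannot change sign. -/
theorem deriv_pos (hsol : MinimalGraphSolution I y y' y'') (hI : IsOpen I) (hI' : I.OrdConnected)
    {x₀ : ℝ} (hx₀ : x₀ ∈ I) (hpos : 0 < y' x₀) : ∀ x ∈ I, 0 < y' x := by
  have hp : ContinuousOn (fun x => 2 * (y x * y' x - x) / (1 + x ^ 2 + y x ^ 2)) I := by
    have hy_cont := hsol.continuousOn
    have hy'_cont := hsol.continuousOn_deriv
    exact ContinuousOn.div (by fun_prop) (by fun_prop) fun x _ => by positivity
  intro x hx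
  rw [eq_mul_exp_integral_of_hasDerivAt_eq_mul hI hI' (fun x hx =>
    (hsol.hasDerivAt_deriv x hx).congr_deriv (by rw [hsol.ode x hx]; ring)) hp hx₀ x hx]
  positivity

theorem second_deriv_neg (hsol : MinimalGraphSolution I y y' y'') {x : ℝ} (hx : x ∈ I)
    (hpos : 0 < y' x) (hneg : y x * y' x - x < 0) : y'' x < 0 := by
  rw [hsol.ode x hx]
  exact div_neg_of_neg_of_pos (by nlinarith) (by positivity)

variable {x₀ c : ℝ}

theorem strictAntiOn_deriv (hsol : MinimalGraphSolution I y y' y'') (hsub : Icc x₀ c ⊆ I)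
    (hpos : ∀ x ∈ Ioo x₀ c, 0 < y' x) (hneg : ∀ x ∈ Ioo x₀ c, y x * y' x - x < 0) :
    StrictAntiOn y' (Icc x₀ c) := by
  refine strictAntiOn_of_deriv_neg (convex_Icc x₀ c) (hsol.continuousOn_deriv.mono hsub)
    fun x hx => ?_
  rw [interior_Icc] at hx
  have hxI := hsub (Ioo_subset_Icc_self hx)
  rw [(hsol.hasDerivAt_deriv x hxI).deriv]
  exact hsol.second_deriv_neg hxI (hpos x hx) (hneg x hx)

theorem sub_lt_deriv_mul (hsol : MinimalGraphSolution I y y' y'') (hc : x₀ < c)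
    (hsub : Icc x₀ c ⊆ I) (hpos : ∀ x ∈ Ioo x₀ c, 0 < y' x)
    (hneg : ∀ x ∈ Ioo x₀ c, y x * y' x - x < 0) : y c - y x₀ < y' x₀ * (c - x₀) := by
  obtain ⟨ξ, hξ, hslope⟩ := exists_hasDerivAt_eq_slope y y' hc (hsol.continuousOn.mono hsub)
    fun x hx => hsol.hasDerivAt x (hsub (Ioo_subset_Icc_self hx))
  have hlt : y' ξ < y' x₀ := hsol.strictAntiOn_deriv hsub hpos hneg
    (left_mem_Icc.2 hc.le) (Ioo_subset_Icc_self hξ) hξ.1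
  rw [eq_div_iff (sub_ne_zero.2 hc.ne')] at hslope
  nlinarith

variable {a b : ℝ}

theorem mul_deriv_sub_neg (hsol : MinimalGraphSolution (Ioo a b) y y' y'') (ha : a < 0)
    (h0 : y 0 = 0) (h1 : 0 < y' 0) (h2 : y' 0 < 1) : ∀ x ∈ Ioo 0 b, y x * y' x - x < 0 := by
  intro x hx
  by_contra! hx'
  have h0I : (0 : ℝ) ∈ Ioo a b := ⟨ha, hx.1.trans hx.2⟩
  have hsub : ∀ {c}, c < b → Icc 0 c ⊆ Ioo a b := fun hc t ht =>
    ⟨ha.trans_le ht.1, ht.2.trans_lt hc⟩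
  have hderiv : ∀ t ∈ Ioo a b,
      HasDerivAt (fun t => y t * y' t - t) (y' t * y' t + y t * y'' t - 1) t := fun t ht =>
    ((hsol.hasDerivAt t ht).mul (hsol.hasDerivAt_deriv t ht)).sub (hasDerivAt_id t)
  have hnear : ∀ᶠ t in 𝓝[>] 0, y t * y' t - t < 0 :=
    (hderiv 0 h0I).eventually_neg_nhdsGT (by rw [h0]; nlinarith) (by simp [h0])
  obtain ⟨c, ⟨hc0, hcx⟩, hc_nonneg, hneg⟩ := exists_first_nonneg_of_eventually_neg hx.1
    (fun t ht => (hderiv t (hsub hx.2 ht)).continuousAt.continuousWithinAt) hnear hx'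
  have hcb : c < b := hcx.trans_lt hx.2
  have hpos := hsol.deriv_pos isOpen_Ioo ordConnected_Ioo h0I h1
  have hpos' : ∀ t ∈ Ioo 0 c, 0 < y' t := fun t ht => hpos t (hsub hcb (Ioo_subset_Icc_self ht))
  have hy'c : y' c < y' 0 := hsol.strictAntiOn_deriv (hsub hcb) hpos' hneg
    (left_mem_Icc.2 hc0.le) (right_mem_Icc.2 hc0.le) hc0
  have hyc : y c - y 0 < y' 0 * (c - 0) := hsol.sub_lt_deriv_mul hc0 (hsub hcb) hpos' hneg
  have hy'c_pos := hpos c (hsub hcb (right_mem_Icc.2 hc0.le))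
  simp only [h0, sub_zero] at hyc
  rcases le_or_gt (y c) 0 with hyc_nonpos | hyc_pos
  · linarith [mul_nonpos_of_nonpos_of_nonneg hyc_nonpos hy'c_pos.le]
  · linarith [mul_lt_of_lt_one_right hyc_pos (hy'c.trans h2), mul_lt_of_lt_one_left hc0 h2]

end MinimalGraphSolution

/-- Let y solve y'' = 2y'(yy' − x)/(1 + x² + y²) on an open interval I = (a,b) ∋ 0,
with y(0) = 0 and 0 < y'(0) < 1. Then on I ∩ [0,∞):
(a) y' > 0; (b) yy' − x < 0 and y'' < 0 for x > 0; (c) y' < y'(0) < 1 for x > 0;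
(d) y < x for x > 0. -/
theorem minimal_graph_properties (a b : ℝ) (ha : a < 0) (hb : 0 < b)
    (y y' y'' : ℝ → ℝ)
    (hy : ∀ x ∈ Set.Ioo a b, HasDerivAt y (y' x) x)
    (hy' : ∀ x ∈ Set.Ioo a b, HasDerivAt y' (y'' x) x)
    (heq : ∀ x ∈ Set.Ioo a b,
      y'' x = 2 * y' x * (y x * y' x - x) / (1 + x ^ 2 + (y x) ^ 2))
    (h0 : y 0 = 0) (h1 : 0 < y' 0) (h2 : y' 0 < 1) :
    ∀ x ∈ Set.Ioo a b, 0 ≤ x →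
      (0 < y' x) ∧
      (0 < x → y x * y' x - x < 0 ∧ y'' x < 0) ∧
      (0 < x → y' x < y' 0) ∧
      (0 < x → y x < x) := by
  have hsol : MinimalGraphSolution (Ioo a b) y y' y'' := ⟨hy, hy', heq⟩
  have hpos := hsol.deriv_pos isOpen_Ioo ordConnected_Ioo ⟨ha, hb⟩ h1
  have hneg := hsol.mul_deriv_sub_neg ha h0 h1 h2
  intro x hx hx0
  have hsub : Icc 0 x ⊆ Ioo a b := fun t ht => ⟨ha.trans_le ht.1, ht.2.trans_lt hx.2⟩
  have hpos' : ∀ t ∈ Ioo 0 x, 0 < y' t := fun t ht => hpos t (hsub (Ioo_subset_Icc_self ht))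
  have hneg' : ∀ t ∈ Ioo 0 x, y t * y' t - t < 0 := fun t ht => hneg t ⟨ht.1, ht.2.trans hx.2⟩
  refine ⟨hpos x hx, fun hx0' => ⟨hneg x ⟨hx0', hx.2⟩, ?_⟩, fun hx0' => ?_, fun hx0' => ?_⟩
  · exact hsol.second_deriv_neg hx (hpos x hx) (hneg x ⟨hx0', hx.2⟩)
  · exact hsol.strictAntiOn_deriv hsub hpos' hneg' (left_mem_Icc.2 hx0) (right_mem_Icc.2 hx0) hx0'
  · have hyx := hsol.sub_lt_deriv_mul hx0' hsub hpos' hneg'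
    simp only [h0, sub_zero] at hyx
    linarith [mul_lt_of_lt_one_left hx0' h2]
end
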